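/- arXiv:2405.11419 — 2 statements merged into one kernel-verified Lean document; each statement's English description precedes it below -/
import Mathlib

section
/- Let ξ be a random function from a finite domain D to {-1,+1} such that for distinct values d ≠ d', ξ(d) and ξ(d') are independent and uniform on {-1,+1} (2-wise independence). Let X_A and X_B be the debiased sketch contributions of values d_A and d_B (from two sketches built with the same ξ), each of the form c_ε k B ξ(d) H[·,L] H[L,·] 1{J = j}, with independent randomness across the two sketches, conditioned on equal hash cells h_j(d_A) = h_j(d_B) = x. Then E[X_A · X_B] = 1 if d_A = d_B, and E[X_A · X_B] = 0 if d_A ≠ d_B. -/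
/-- The Sylvester Hadamard matrix of order `2^t`, defined recursively by
`H_1 = [1]` and `H_{2n} = [[H_n, H_n], [H_n, -H_n]]`. -/
noncomputable def Had : (t : ℕ) → Matrix (Fin (2^t)) (Fin (2^t)) ℝ
  | 0 => fun _ _ => 1
  | (t+1) => fun i j =>
      (if 2^t ≤ (i : ℕ) ∧ 2^t ≤ (j : ℕ) then (-1 : ℝ) else 1) *
        Had t ⟨(i : ℕ) % 2^t, Nat.mod_lt _ (by positivity)⟩
              ⟨(j : ℕ) % 2^t, Nat.mod_lt _ (by positivity)⟩

/-- The probability mass of one sample `(J, L, B)` of the client's randomness: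
`J` uniform on `Fin k`, `L` uniform on `Fin (2^t)`, and the sign bit `B` equal to `+1`
(`true`) with probability `e^ε/(1+e^ε)` and `-1` (`false`) with probability `1/(1+e^ε)`. -/
noncomputable def sketchPMF (ε : ℝ) (k t : ℕ) (ω : Fin k × Fin (2^t) × Bool) : ℝ :=
  ((1 : ℝ)/k) * ((1 : ℝ)/2^t) *
    (if ω.2.2 then Real.exp ε / (1 + Real.exp ε) else 1 / (1 + Real.exp ε))

/-- The debiased contribution `c_ε · k · B · s · H_m[a, L] · H_m[L, x] · 1{J = j}`
of an entry encoded at hash cell `a` with sign `s` to the sketch cell `(j, x)`. -/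
noncomputable def contrib (ε : ℝ) (k t : ℕ) (a x : Fin (2^t)) (s : ℝ) (j : Fin k)
    (ω : Fin k × Fin (2^t) × Bool) : ℝ :=
  ((Real.exp ε + 1)/(Real.exp ε - 1)) * k * (if ω.2.2 then (1 : ℝ) else -1) * s *
    Had t a ω.2.1 * Had t ω.2.1 x * (if ω.1 = j then 1 else 0)

/-! Given the shared sign function, the two contributions use independent randomness, so the
expectation of their product factorises. Each factor is unbiased: `H[x,L] H[L,x] = H[x,L]^2 = 1`
since the Sylvester matrix is symmetric with `±1` entries, the indicator of `J = j` cancels the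
factor `k`, and `c_ε` cancels the bias `(e^ε - 1)/(e^ε + 1)` of the sign bit. What remains is
`E[ξ(d_A) ξ(d_B)]`, which is `1` on the diagonal and, off it, vanishes because the four sign
patterns of `(ξ(d_A), ξ(d_B))` are equally likely. -/

open Finset

lemma had_isSymm (t : ℕ) : (Had t).IsSymm := by
  refine Matrix.IsSymm.ext fun i j => ?_
  induction t with
  | zero => rfl
  | succ t ih => simp only [Had, ih, and_comm]

lemma had_mul_self (t : ℕ) (i j : Fin (2^t)) : Had t i j * Had t i j = 1 := by
  induction t with
  | zero => simp [Had]
  | succ t ih =>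
    simp only [Had]
    split_ifs <;> linear_combination ih _ _

lemma sum_sketchPMF_mul_contrib {ε : ℝ} (hε : ε ≠ 0) {k : ℕ} (hk : k ≠ 0) (t : ℕ)
    (x : Fin (2^t)) (s : ℝ) (j : Fin k) :
    ∑ ω, sketchPMF ε k t ω * contrib ε k t x x s j ω = s := by
  have hexp : Real.exp ε - 1 ≠ 0 := sub_ne_zero.2 (by simpa using hε)
  have hsquare (L : Fin (2^t)) : Had t x L * Had t L x = 1 := by
    rw [(had_isSymm t).apply x L]; exact had_mul_self t x L
  rw [Fintype.sum_prod_type, Fintype.sum_eq_single j fun J hJ => by simp [contrib, hJ]]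
  simp only [sketchPMF, contrib, Fintype.sum_prod_type, Fintype.sum_bool, mul_assoc, hsquare,
    ↓reduceIte, Bool.false_eq_true, mul_one, sum_const, card_univ, Fintype.card_fin, nsmul_eq_mul,
    Nat.cast_pow, Nat.cast_ofNat]
  field_simp
  ring

lemma sum_sum_mul_mul_contrib {ε : ℝ} (hε : ε ≠ 0) {k : ℕ} (hk : k ≠ 0) (t : ℕ)
    (x : Fin (2^t)) (r s s' : ℝ) (j : Fin k) :
    ∑ ωA, ∑ ωB, r * sketchPMF ε k t ωA * sketchPMF ε k t ωB *
        (contrib ε k t x x s j ωA * contrib ε k t x x s' j ωB) = r * (s * s') := by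
  conv_rhs => rw [← sum_sketchPMF_mul_contrib hε hk t x s j,
    ← sum_sketchPMF_mul_contrib hε hk t x s' j, sum_mul_sum, mul_sum]
  refine sum_congr rfl fun ωA _ => ?_
  rw [mul_sum]
  exact sum_congr rfl fun ωB _ => by ring

section SignCorrelation

variable {Ξ : Type*} [Fintype Ξ] {ρ : Ξ → ℝ} {a b : Ξ → ℝ}

lemma sum_mul_sign_mul_self (hρ1 : ∑ e, ρ e = 1) (ha : ∀ e, a e = 1 ∨ a e = -1) :
    ∑ e, ρ e * (a e * a e) = 1 := by
  rw [← hρ1]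
  refine sum_congr rfl fun e _ => ?_
  rcases ha e with h | h <;> rw [h] <;> ring

lemma sum_mul_sign_mul_of_uniform (ha : ∀ e, a e = 1 ∨ a e = -1) (hb : ∀ e, b e = 1 ∨ b e = -1)
    (hab : ∀ s s' : ℝ, (s = 1 ∨ s = -1) → (s' = 1 ∨ s' = -1) →
      (∑ e, if a e = s ∧ b e = s' then ρ e else 0) = 1/4) :
    ∑ e, ρ e * (a e * b e) = 0 := by
  have hcells (e : Ξ) : ρ e * (a e * b e) =
      (if a e = 1 ∧ b e = 1 then ρ e else 0) + (if a e = -1 ∧ b e = -1 then ρ e else 0)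
        - (if a e = 1 ∧ b e = -1 then ρ e else 0) - (if a e = -1 ∧ b e = 1 then ρ e else 0) := by
    rcases ha e with h | h <;> rcases hb e with h' | h' <;> rw [h, h'] <;> norm_num
  rw [sum_congr rfl fun e _ => hcells e, sum_sub_distrib, sum_sub_distrib, sum_add_distrib,
    hab 1 1 (.inl rfl) (.inl rfl), hab (-1) (-1) (.inr rfl) (.inr rfl),
    hab 1 (-1) (.inl rfl) (.inr rfl), hab (-1) 1 (.inr rfl) (.inl rfl)]
  norm_num

end SignCorrelation

open Classical in
theorem stmt_9_general (ε : ℝ) (hε : 0 < ε) (t k : ℕ) (hk : 0 < k) (D : Type)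
    (Ξ : Type) [Fintype Ξ] (ρ : Ξ → ℝ) (hρ1 : ∑ e, ρ e = 1)
    (ξ : Ξ → D → ℝ) (hξval : ∀ e x, ξ e x = 1 ∨ ξ e x = -1)
    (hξ2 : ∀ x x' : D, x ≠ x' → ∀ s s' : ℝ, (s = 1 ∨ s = -1) → (s' = 1 ∨ s' = -1) →
      (∑ e, if ξ e x = s ∧ ξ e x' = s' then ρ e else 0) = 1/4)
    (h : D → Fin (2^t)) (j : Fin k) (x : Fin (2^t)) (dA dB : D)
    (hA : h dA = x) (hB : h dB = x) :
    ∑ e, ∑ ωA : Fin k × Fin (2^t) × Bool, ∑ ωB : Fin k × Fin (2^t) × Bool,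
        ρ e * sketchPMF ε k t ωA * sketchPMF ε k t ωB *
          (contrib ε k t (h dA) x (ξ e dA) j ωA * contrib ε k t (h dB) x (ξ e dB) j ωB)
      = if dA = dB then 1 else 0 := by
  rw [hA, hB]
  simp only [sum_sum_mul_mul_contrib hε.ne' hk.ne']
  split_ifs with hd
  · subst hd
    exact sum_mul_sign_mul_self hρ1 (hξval · dA)
  · exact sum_mul_sign_mul_of_uniform (hξval · dA) (hξval · dB) (hξ2 dA dB hd)

open Classical in
/-- Product of entries from two sketches: if `ξ` is a 2-wise independent uniform random
sign function and `X_A`, `X_B` are the debiased contributions of values `d_A`, `d_B`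
(with independent per-user randomness) to the same cell `(j, x)` of the two sketches,
with `h(d_A) = h(d_B) = x`, then `E[X_A · X_B] = 1` if `d_A = d_B` and `0` otherwise. -/
theorem stmt_9 (ε : ℝ) (hε : 0 < ε) (t k : ℕ) (hk : 0 < k) (D : Type)
    (Ξ : Type) [Fintype Ξ] (ρ : Ξ → ℝ) (hρ0 : ∀ e, 0 ≤ ρ e) (hρ1 : ∑ e, ρ e = 1)
    (ξ : Ξ → D → ℝ) (hξval : ∀ e x, ξ e x = 1 ∨ ξ e x = -1)
    (hξ2 : ∀ x x' : D, x ≠ x' → ∀ s s' : ℝ, (s = 1 ∨ s = -1) → (s' = 1 ∨ s' = -1) →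
      (∑ e, if ξ e x = s ∧ ξ e x' = s' then ρ e else 0) = 1/4)
    (h : D → Fin (2^t)) (j : Fin k) (x : Fin (2^t)) (dA dB : D)
    (hA : h dA = x) (hB : h dB = x) :
    ∑ e, ∑ ωA : Fin k × Fin (2^t) × Bool, ∑ ωB : Fin k × Fin (2^t) × Bool,
        ρ e * sketchPMF ε k t ωA * sketchPMF ε k t ωB *
          (contrib ε k t (h dA) x (ξ e dA) j ωA * contrib ε k t (h dB) x (ξ e dB) j ωB)
      = if dA = dB then 1 else 0 :=
  stmt_9_general ε hε t k hk D Ξ ρ hρ1 ξ hξval hξ2 h j x dA dB hA hB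
end

section
/- Consider the frequency-aware perturbation (FAP) mechanism: on a non-target input, it outputs (y, j, l) with y = B·H_m[l, R] where R ~ Uniform{0,...,m-1}; on a target input d', it outputs (y, j, l) with y = B·H_m[l, h_j(d')]·ξ_j(d'), where in both cases J ~ Uniform{0,...,k-1}, L ~ Uniform{0,...,m-1}, B ∈ {±1} with Pr[B=1] = e^ε/(1+e^ε), all independent. Then for any output (y,j,l) with y ∈ {-1,+1}, e^{-ε} ≤ Pr[FAP(d)=(y,j,l)] / Pr[FAP(d')=(y,j,l)] ≤ e^ε; hence FAP satisfies ε-LDP even across target and non-target inputs. -/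
lemma Had_pm : ∀ (t : ℕ) (i j : Fin (2^t)), Had t i j = 1 ∨ Had t i j = -1 := by
  intro t
  induction t with
  | zero => intro i j; left; rfl
  | succ t ih =>
    intro i j
    simp only [Had]
    rcases ih ⟨(i : ℕ) % 2^t, Nat.mod_lt _ (by positivity)⟩
              ⟨(j : ℕ) % 2^t, Nat.mod_lt _ (by positivity)⟩ with hh | hh <;>
      rw [hh] <;> split <;> norm_num

lemma bsum (s y α β : ℝ) (hs : s = 1 ∨ s = -1) (hy : y = 1 ∨ y = -1) :
    (∑ b : Bool, if (if b then (1:ℝ) else -1) * s = y then (if b then α else β) else 0)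
      = if s = y then α else β := by
  rw [Fintype.sum_bool]
  rcases hs with hs | hs <;> rcases hy with hy | hy <;> subst hs <;> subst hy <;> norm_num

lemma ratio_bound (e A c N D : ℝ) (he : 1 ≤ e) (hc : 0 < c) (hA : 0 < A)
    (hN1 : A * c ≤ N) (hN2 : N ≤ A * (e * c)) (hD1 : A * c ≤ D) (hD2 : D ≤ A * (e * c)) :
    e⁻¹ ≤ N / D ∧ N / D ≤ e := by
  have hD0 : 0 < D := lt_of_lt_of_le (by positivity) hD1
  have he0 : 0 < e := lt_of_lt_of_le one_pos he
  constructor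
  · rw [le_div_iff₀ hD0]
    calc e⁻¹ * D ≤ e⁻¹ * (A * (e * c)) := by
          have := inv_pos.mpr he0
          nlinarith
      _ = A * c := by field_simp
      _ ≤ N := hN1
  · rw [div_le_iff₀ hD0]
    calc N ≤ A * (e * c) := hN2
      _ = e * (A * c) := by ring
      _ ≤ e * D := by nlinarith

open Classical in
/-- The frequency-aware perturbation (FAP) mechanism satisfies ε-LDP across target and
non-target inputs: for a non-target input the output is `(B·H_m[L,R], J, L)` with `R`
uniform, for a target input `d'` it is `(B·H_m[L, h_J(d')]·ξ_J(d'), J, L)`; for every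
output `(y, j, l)` with `y ∈ {-1,+1}`,
`e^{-ε} ≤ Pr[FAP(d) = (y,j,l)] / Pr[FAP(d') = (y,j,l)] ≤ e^ε`. -/
theorem stmt_15 (ε : ℝ) (hε : 0 ≤ ε) (t k : ℕ) (D : Type)
    (h : Fin k → D → Fin (2^t)) (ξ : Fin k → D → ℝ)
    (hξ : ∀ j d, ξ j d = 1 ∨ ξ j d = -1)
    (d' : D) (y : ℝ) (hy : y = 1 ∨ y = -1) (j : Fin k) (l : Fin (2^t)) :
    Real.exp (-ε) ≤
      (∑ ω : Fin k × Fin (2^t) × Fin (2^t) × Bool,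
        if (((if ω.2.2.2 then (1:ℝ) else -1) * Had t ω.2.1 ω.2.2.1, ω.1, ω.2.1)
            : ℝ × Fin k × Fin (2^t)) = (y, j, l) then
          ((1:ℝ)/k) * ((1:ℝ)/2^t) * ((1:ℝ)/2^t) *
            (if ω.2.2.2 then Real.exp ε / (1 + Real.exp ε) else 1 / (1 + Real.exp ε))
        else 0) /
      (∑ ω : Fin k × Fin (2^t) × Bool,
        if (((if ω.2.2 then (1:ℝ) else -1) * Had t ω.2.1 (h ω.1 d') * ξ ω.1 d', ω.1, ω.2.1)
            : ℝ × Fin k × Fin (2^t)) = (y, j, l) then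
          ((1:ℝ)/k) * ((1:ℝ)/2^t) *
            (if ω.2.2 then Real.exp ε / (1 + Real.exp ε) else 1 / (1 + Real.exp ε))
        else 0) ∧
    (∑ ω : Fin k × Fin (2^t) × Fin (2^t) × Bool,
        if (((if ω.2.2.2 then (1:ℝ) else -1) * Had t ω.2.1 ω.2.2.1, ω.1, ω.2.1)
            : ℝ × Fin k × Fin (2^t)) = (y, j, l) then
          ((1:ℝ)/k) * ((1:ℝ)/2^t) * ((1:ℝ)/2^t) *
            (if ω.2.2.2 then Real.exp ε / (1 + Real.exp ε) else 1 / (1 + Real.exp ε))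
        else 0) /
      (∑ ω : Fin k × Fin (2^t) × Bool,
        if (((if ω.2.2 then (1:ℝ) else -1) * Had t ω.2.1 (h ω.1 d') * ξ ω.1 d', ω.1, ω.2.1)
            : ℝ × Fin k × Fin (2^t)) = (y, j, l) then
          ((1:ℝ)/k) * ((1:ℝ)/2^t) *
            (if ω.2.2 then Real.exp ε / (1 + Real.exp ε) else 1 / (1 + Real.exp ε))
        else 0) ≤ Real.exp ε := by
  have hk : 0 < k := j.pos
  have hkR : (0:ℝ) < k := by exact_mod_cast hk
  have h1 : (0:ℝ) < 1 + Real.exp ε := by positivity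
  have he1 : 1 ≤ Real.exp ε := Real.one_le_exp hε
  set c : ℝ := 1 / (1 + Real.exp ε) with hc_def
  set C : ℝ := Real.exp ε / (1 + Real.exp ε) with hC_def
  have hc0 : 0 < c := by rw [hc_def]; positivity
  have hcC : c ≤ C := by rw [hc_def, hC_def]; gcongr
  have hCec : C = Real.exp ε * c := by rw [hc_def, hC_def]; ring
  set A : ℝ := (1:ℝ)/k * ((1:ℝ)/2^t) with hA_def
  have hA : 0 < A := by rw [hA_def]; positivity
  have hm0 : (0:ℝ) < 2^t := by positivity
  -- numerator
  have hnum : (∑ ω : Fin k × Fin (2^t) × Fin (2^t) × Bool,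
        if (((if ω.2.2.2 then (1:ℝ) else -1) * Had t ω.2.1 ω.2.2.1, ω.1, ω.2.1)
            : ℝ × Fin k × Fin (2^t)) = (y, j, l) then
          ((1:ℝ)/k) * ((1:ℝ)/2^t) * ((1:ℝ)/2^t) *
            (if ω.2.2.2 then C else c)
        else 0)
      = ∑ r : Fin (2^t), (if Had t l r = y then (1:ℝ)/k * ((1:ℝ)/2^t) * ((1:ℝ)/2^t) * C
          else (1:ℝ)/k * ((1:ℝ)/2^t) * ((1:ℝ)/2^t) * c) := by
    simp only [Fintype.sum_prod_type]
    rw [Finset.sum_eq_single_of_mem j (Finset.mem_univ j)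
      (by intro b _ hb; apply Finset.sum_eq_zero; intro l' _; apply Finset.sum_eq_zero;
          intro r _; apply Finset.sum_eq_zero; intro bb _; simp [Prod.ext_iff, hb])]
    rw [Finset.sum_eq_single_of_mem l (Finset.mem_univ l)
      (by intro b _ hb; apply Finset.sum_eq_zero; intro r _; apply Finset.sum_eq_zero;
          intro bb _; simp [Prod.ext_iff, hb])]
    refine Finset.sum_congr rfl fun r _ => ?_
    rw [show (∑ b : Bool,
        if (((if b then (1:ℝ) else -1) * Had t l r, j, l) : ℝ × Fin k × Fin (2^t)) = (y, j, l)
        then ((1:ℝ)/k) * ((1:ℝ)/2^t) * ((1:ℝ)/2^t) * (if b then C else c) else 0)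
      = ∑ b : Bool,
        if ((if b then (1:ℝ) else -1) * Had t l r = y)
        then (if b then (1:ℝ)/k * ((1:ℝ)/2^t) * ((1:ℝ)/2^t) * C
              else (1:ℝ)/k * ((1:ℝ)/2^t) * ((1:ℝ)/2^t) * c) else 0 from by
      refine Finset.sum_congr rfl fun b _ => ?_
      simp [Prod.ext_iff, mul_ite]]
    exact bsum _ _ _ _ (Had_pm t l r) hy
  -- denominator
  have hden : (∑ ω : Fin k × Fin (2^t) × Bool,
        if (((if ω.2.2 then (1:ℝ) else -1) * Had t ω.2.1 (h ω.1 d') * ξ ω.1 d', ω.1, ω.2.1)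
            : ℝ × Fin k × Fin (2^t)) = (y, j, l) then
          ((1:ℝ)/k) * ((1:ℝ)/2^t) *
            (if ω.2.2 then C else c)
        else 0)
      = (if Had t l (h j d') * ξ j d' = y then (1:ℝ)/k * ((1:ℝ)/2^t) * C
          else (1:ℝ)/k * ((1:ℝ)/2^t) * c) := by
    simp only [Fintype.sum_prod_type]
    rw [Finset.sum_eq_single_of_mem j (Finset.mem_univ j)
      (by intro b _ hb; apply Finset.sum_eq_zero; intro l' _; apply Finset.sum_eq_zero;
          intro bb _; simp [Prod.ext_iff, hb])]
    rw [Finset.sum_eq_single_of_mem l (Finset.mem_univ l)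
      (by intro b _ hb; apply Finset.sum_eq_zero; intro bb _; simp [Prod.ext_iff, hb])]
    rw [show (∑ b : Bool,
        if (((if b then (1:ℝ) else -1) * Had t l (h j d') * ξ j d', j, l)
            : ℝ × Fin k × Fin (2^t)) = (y, j, l)
        then ((1:ℝ)/k) * ((1:ℝ)/2^t) * (if b then C else c) else 0)
      = ∑ b : Bool,
        if ((if b then (1:ℝ) else -1) * (Had t l (h j d') * ξ j d') = y)
        then (if b then (1:ℝ)/k * ((1:ℝ)/2^t) * C else (1:ℝ)/k * ((1:ℝ)/2^t) * c) else 0 from by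
      refine Finset.sum_congr rfl fun b _ => ?_
      simp [Prod.ext_iff, mul_ite, mul_assoc]]
    refine bsum _ _ _ _ ?_ hy
    rcases Had_pm t l (h j d') with h1' | h1' <;> rcases hξ j d' with h2' | h2' <;>
      rw [h1', h2'] <;> norm_num
  rw [hnum, hden]
  rw [Real.exp_neg]
  -- bounds
  have card : (Finset.univ : Finset (Fin (2^t))).card = 2^t := by simp
  have hAA : (2^t : ℝ) * ((1:ℝ)/k * ((1:ℝ)/2^t) * ((1:ℝ)/2^t)) = A := by
    rw [hA_def]; field_simp
  have hN1 : A * c ≤ ∑ r : Fin (2^t), (if Had t l r = y then (1:ℝ)/k * ((1:ℝ)/2^t) * ((1:ℝ)/2^t) * C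
          else (1:ℝ)/k * ((1:ℝ)/2^t) * ((1:ℝ)/2^t) * c) := by
    calc A * c = ∑ _r : Fin (2^t), (1:ℝ)/k * ((1:ℝ)/2^t) * ((1:ℝ)/2^t) * c := by
          rw [Finset.sum_const, card, nsmul_eq_mul]
          push_cast
          rw [← hAA]; ring
      _ ≤ _ := by
          apply Finset.sum_le_sum
          intro r _
          have h0 : (0:ℝ) ≤ (1:ℝ)/k * ((1:ℝ)/2^t) * ((1:ℝ)/2^t) := by positivity
          split_ifs
          · nlinarith
          · exact le_rfl
  have hN2 : (∑ r : Fin (2^t), (if Had t l r = y then (1:ℝ)/k * ((1:ℝ)/2^t) * ((1:ℝ)/2^t) * C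
          else (1:ℝ)/k * ((1:ℝ)/2^t) * ((1:ℝ)/2^t) * c)) ≤ A * (Real.exp ε * c) := by
    rw [← hCec]
    calc (∑ r : Fin (2^t), (if Had t l r = y then (1:ℝ)/k * ((1:ℝ)/2^t) * ((1:ℝ)/2^t) * C
          else (1:ℝ)/k * ((1:ℝ)/2^t) * ((1:ℝ)/2^t) * c))
        ≤ ∑ _r : Fin (2^t), (1:ℝ)/k * ((1:ℝ)/2^t) * ((1:ℝ)/2^t) * C := by
          apply Finset.sum_le_sum
          intro r _
          have h0 : (0:ℝ) ≤ (1:ℝ)/k * ((1:ℝ)/2^t) * ((1:ℝ)/2^t) := by positivity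
          split_ifs
          · exact le_rfl
          · nlinarith
      _ = A * C := by
          rw [Finset.sum_const, card, nsmul_eq_mul]
          push_cast
          rw [← hAA]; ring
  have hD1 : A * c ≤ (if Had t l (h j d') * ξ j d' = y then (1:ℝ)/k * ((1:ℝ)/2^t) * C
          else (1:ℝ)/k * ((1:ℝ)/2^t) * c) := by
    have h0 : (0:ℝ) ≤ (1:ℝ)/k * ((1:ℝ)/2^t) := by positivity
    rw [hA_def]
    split_ifs
    · nlinarith
    · exact le_rfl
  have hD2 : (if Had t l (h j d') * ξ j d' = y then (1:ℝ)/k * ((1:ℝ)/2^t) * C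
          else (1:ℝ)/k * ((1:ℝ)/2^t) * c) ≤ A * (Real.exp ε * c) := by
    rw [← hCec]
    have h0 : (0:ℝ) ≤ (1:ℝ)/k * ((1:ℝ)/2^t) := by positivity
    rw [hA_def]
    split_ifs
    · exact le_rfl
    · nlinarith

  exact ratio_bound (Real.exp ε) A c _ _ he1 hc0 hA hN1 hN2 hD1 hD2
end
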